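/- arXiv:1703.01264 — 4 statements merged into one kernel-verified Lean document; each statement's English description precedes it below -/
import Mathlib

section
/- If a two-dimensional torus is endowed with a flat metric, then the normalized first eigenvalue λ₁·area is at most 8π²/√3, with equality for the flat equilateral torus. -/
/-!
The eigenvalues of the flat torus `ℝ²/Λ` are `4π²‖ξ‖²` for `ξ` in the dual lattice `Λ*`,
whose covolume is `1 / area`, so the bound is Hermite's constant `γ₂ = 2/√3`: a lattice of
covolume `D` has a nonzero vector `x` with `‖x‖² ≤ 2D/√3`. Take `x` of minimal norm among
primitive vectors and complete it to a basis `(x, y)` with `y` of minimal norm. Then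
`‖x‖ ≤ ‖y‖ ≤ ‖y ± x‖`, hence `2|⟪x, y⟫| ≤ ‖x‖²` and `D² = ‖x‖²‖y‖² - ⟪x, y⟫² ≥ 3‖x‖⁴/4`.
For the equilateral torus the dual norm form is `4/3 (a² - ab + b²)`, whose minimum on
nonzero integer points is `1`.
-/

open Real

/-- The first nonzero eigenvalue of the flat torus `ℝ²/Λ`, where the lattice `Λ` is
spanned by the columns of the invertible matrix `A`.  The eigenvalues of the Laplacian
are `4π²‖ξ‖²` for `ξ` in the dual lattice, which is spanned by the columns of `(Aᵀ)⁻¹`. -/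
noncomputable def flatTorusLambda1 (A : Matrix (Fin 2) (Fin 2) ℝ) : ℝ :=
  sInf {t : ℝ | ∃ m : Fin 2 → ℤ, m ≠ 0 ∧
    t = 4 * π ^ 2 * (((A.transpose)⁻¹.mulVec (fun i => (m i : ℝ)) 0) ^ 2 +
      ((A.transpose)⁻¹.mulVec (fun i => (m i : ℝ)) 1) ^ 2)}

/-- The area of the flat torus `ℝ²/Λ` is the covolume `|det A|` of the lattice. -/
noncomputable def flatTorusArea (A : Matrix (Fin 2) (Fin 2) ℝ) : ℝ := |A.det|

open Filter Matrix WithLp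

open scoped RealInnerProductSpace

section Hermite

variable {E : Type*} [NormedAddCommGroup E] [InnerProductSpace ℝ E]

def gramDet (u v : E) : ℝ := ‖u‖ ^ 2 * ‖v‖ ^ 2 - ⟪u, v⟫ ^ 2

def latticePoint (u v : E) (m : Fin 2 → ℤ) : E := (m 0 : ℝ) • u + (m 1 : ℝ) • v

lemma gramDet_comm (u v : E) : gramDet u v = gramDet v u := by
  rw [gramDet, gramDet, real_inner_comm, mul_comm]

lemma gramDet_le (u v : E) : gramDet u v ≤ ‖u‖ ^ 2 * ‖v‖ ^ 2 :=
  sub_le_self _ (sq_nonneg _)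

lemma gramDet_smul_add_smul (u v : E) (a b c d : ℝ) :
    gramDet (a • u + b • v) (c • u + d • v) = (a * d - b * c) ^ 2 * gramDet u v := by
  simp only [gramDet, ← real_inner_self_eq_norm_sq, inner_add_left, inner_add_right,
    real_inner_smul_left, real_inner_smul_right, real_inner_comm u v]
  ring

lemma sq_mul_gramDet_le (u v : E) (a b : ℝ) :
    a ^ 2 * gramDet u v ≤ ‖v‖ ^ 2 * ‖a • u + b • v‖ ^ 2 := by
  have h := gramDet_smul_add_smul u v a b 0 1
  rw [zero_smul, one_smul, zero_add, mul_one, mul_zero, sub_zero] at h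
  rw [← h, mul_comm]
  exact gramDet_le _ _

lemma latticePoint_add (u v : E) (m n : Fin 2 → ℤ) :
    latticePoint u v (m + n) = latticePoint u v m + latticePoint u v n := by
  simp only [latticePoint, Pi.add_apply, Int.cast_add, add_smul]
  abel

lemma latticePoint_sub (u v : E) (m n : Fin 2 → ℤ) :
    latticePoint u v (m - n) = latticePoint u v m - latticePoint u v n := by
  simp only [latticePoint, Pi.sub_apply, Int.cast_sub, sub_smul]
  abel

lemma finite_setOf_int_sq_le (C : ℝ) : {a : ℤ | (a : ℝ) ^ 2 ≤ C}.Finite := by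
  refine (Set.finite_Icc (-⌈√C⌉) ⌈√C⌉).subset fun a ha => ?_
  have h : |(a : ℝ)| ≤ ⌈√C⌉ := (abs_le_sqrt ha).trans (Int.le_ceil _)
  exact abs_le.mp (by exact_mod_cast h)

lemma tendsto_norm_latticePoint_cofinite_atTop {u v : E} (hD : 0 < gramDet u v) :
    Tendsto (fun m => ‖latticePoint u v m‖) cofinite atTop := by
  refine tendsto_atTop.2 fun R => eventually_cofinite.2 ?_
  have hfin (w : E) : {a : ℤ | (a : ℝ) ^ 2 * gramDet u v ≤ ‖w‖ ^ 2 * R ^ 2}.Finite := by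
    simpa only [← le_div_iff₀ hD] using finite_setOf_int_sq_le _
  refine (Set.Finite.pi (t := ![_, _]) (Fin.forall_fin_two.2 ⟨hfin v, hfin u⟩)).subset
    fun m hm => ?_
  have hR : ‖latticePoint u v m‖ ^ 2 ≤ R ^ 2 :=
    pow_le_pow_left₀ (norm_nonneg _) (le_of_not_ge hm) 2
  refine Set.mem_univ_pi.2 (Fin.forall_fin_two.2 ⟨?_, ?_⟩)
  · calc (m 0 : ℝ) ^ 2 * gramDet u v ≤ ‖v‖ ^ 2 * ‖latticePoint u v m‖ ^ 2 :=
          sq_mul_gramDet_le u v _ _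
      _ ≤ ‖v‖ ^ 2 * R ^ 2 := by gcongr
  · calc (m 1 : ℝ) ^ 2 * gramDet u v ≤ ‖u‖ ^ 2 * ‖latticePoint u v m‖ ^ 2 := by
          rw [gramDet_comm, latticePoint, add_comm]
          exact sq_mul_gramDet_le v u _ _
      _ ≤ ‖u‖ ^ 2 * R ^ 2 := by gcongr

lemma three_mul_norm_pow_four_le_four_mul_gramDet {x y : E} (hxy : ‖x‖ ≤ ‖y‖)
    (h_add : ‖y‖ ≤ ‖y + x‖) (h_sub : ‖y‖ ≤ ‖y - x‖) : 3 * ‖x‖ ^ 4 ≤ 4 * gramDet x y := by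
  have h_add' := pow_le_pow_left₀ (norm_nonneg _) h_add 2
  have h_sub' := pow_le_pow_left₀ (norm_nonneg _) h_sub 2
  have hxy' := pow_le_pow_left₀ (norm_nonneg _) hxy 2
  rw [norm_add_sq_real, real_inner_comm] at h_add'
  rw [norm_sub_sq_real, real_inner_comm] at h_sub'
  unfold gramDet
  nlinarith [sq_nonneg ‖x‖]

theorem exists_three_mul_norm_latticePoint_pow_four_le {u v : E} (hD : 0 < gramDet u v) :
    ∃ m : Fin 2 → ℤ, m ≠ 0 ∧ 3 * ‖latticePoint u v m‖ ^ 4 ≤ 4 * gramDet u v := by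
  have hT := tendsto_norm_latticePoint_cofinite_atTop hD
  obtain ⟨p, ⟨a, b, hab⟩, hp_min⟩ := hT.exists_within_forall_le
    (s := {m : Fin 2 → ℤ | IsCoprime (m 0) (m 1)})
    ⟨![1, 0], isCoprime_one_left⟩
  obtain ⟨q, hq : p 0 * q 1 - p 1 * q 0 = 1, hq_min⟩ := hT.exists_within_forall_le
    (s := {n | p 0 * n 1 - p 1 * n 0 = 1})
    ⟨![-b, a], show p 0 * a - p 1 * -b = 1 by linear_combination hab⟩
  refine ⟨p, fun h => by simp [h] at hab, ?_⟩
  have hgram : gramDet (latticePoint u v p) (latticePoint u v q) = gramDet u v := by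
    have hqR : (p 0 * q 1 - p 1 * q 0 : ℝ) = 1 := by exact_mod_cast hq
    simpa [latticePoint, hqR] using gramDet_smul_add_smul u v (p 0) (p 1) (q 0) (q 1)
  rw [← hgram]
  refine three_mul_norm_pow_four_le_four_mul_gramDet (hp_min q ⟨-p 1, p 0, ?_⟩) ?_ ?_
  · linear_combination hq
  · rw [← latticePoint_add]
    exact hq_min _ (show p 0 * (q 1 + p 1) - p 1 * (q 0 + p 0) = 1 by linear_combination hq)
  · rw [← latticePoint_sub]
    exact hq_min _ (show p 0 * (q 1 - p 1) - p 1 * (q 0 - p 0) = 1 by linear_combination hq)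

end Hermite

lemma gramDet_toLp_rows (M : Matrix (Fin 2) (Fin 2) ℝ) :
    gramDet (toLp 2 (M 0)) (toLp 2 (M 1)) = M.det ^ 2 := by
  simp only [gramDet, EuclideanSpace.real_norm_sq_eq, PiLp.inner_apply, Fin.sum_univ_two,
    det_fin_two, RCLike.inner_apply, conj_trivial]
  ring

lemma norm_latticePoint_toLp_rows_sq (M : Matrix (Fin 2) (Fin 2) ℝ) (m : Fin 2 → ℤ) :
    ‖latticePoint (toLp 2 (M 0)) (toLp 2 (M 1)) m‖ ^ 2 =
      (Mᵀ *ᵥ fun i => (m i : ℝ)) 0 ^ 2 + (Mᵀ *ᵥ fun i => (m i : ℝ)) 1 ^ 2 := by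
  simp only [latticePoint, EuclideanSpace.real_norm_sq_eq, Fin.sum_univ_two, mulVec, dotProduct,
    PiLp.add_apply, PiLp.smul_apply, smul_eq_mul, transpose_apply]
  ring

/-- The rows of `A⁻¹` are the columns of `(Aᵀ)⁻¹`, a basis of the dual lattice. -/
noncomputable def dualLatticePoint (A : Matrix (Fin 2) (Fin 2) ℝ) :
    (Fin 2 → ℤ) → EuclideanSpace ℝ (Fin 2) :=
  latticePoint (toLp 2 (A⁻¹ 0)) (toLp 2 (A⁻¹ 1))

lemma flatTorusLambda1_eq_sInf_image (A : Matrix (Fin 2) (Fin 2) ℝ) :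
    flatTorusLambda1 A =
      sInf ((fun m => 4 * π ^ 2 * ‖dualLatticePoint A m‖ ^ 2) '' {m | m ≠ 0}) := by
  simp only [flatTorusLambda1, dualLatticePoint, norm_latticePoint_toLp_rows_sq,
    transpose_nonsing_inv]
  congr 1
  ext t
  simp [eq_comm]

lemma flatTorusLambda1_le (A : Matrix (Fin 2) (Fin 2) ℝ) {m : Fin 2 → ℤ} (hm : m ≠ 0) :
    flatTorusLambda1 A ≤ 4 * π ^ 2 * ‖dualLatticePoint A m‖ ^ 2 := by
  rw [flatTorusLambda1_eq_sInf_image]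
  exact csInf_le ⟨0, by rintro _ ⟨n, -, rfl⟩; positivity⟩ ⟨m, hm, rfl⟩

lemma le_flatTorusLambda1 (A : Matrix (Fin 2) (Fin 2) ℝ) {c : ℝ}
    (h : ∀ m ≠ 0, c ≤ 4 * π ^ 2 * ‖dualLatticePoint A m‖ ^ 2) : c ≤ flatTorusLambda1 A := by
  rw [flatTorusLambda1_eq_sInf_image]
  exact le_csInf ⟨_, ![1, 0], by simp, rfl⟩ (by rintro _ ⟨m, hm, rfl⟩; exact h m hm)

lemma le_two_div_sqrt_three {x : ℝ} (h : 3 * x ^ 2 ≤ 4) : x ≤ 2 / √3 := by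
  rw [le_div_iff₀ (by positivity)]
  nlinarith [sq_sqrt (show (0 : ℝ) ≤ 3 by norm_num), sqrt_nonneg 3, sq_nonneg (x * √3 - 2)]

theorem flatTorusLambda1_mul_area_le (A : Matrix (Fin 2) (Fin 2) ℝ) (hA : A.det ≠ 0) :
    flatTorusLambda1 A * flatTorusArea A ≤ 8 * π ^ 2 / √3 := by
  have hD : gramDet (toLp 2 (A⁻¹ 0)) (toLp 2 (A⁻¹ 1)) = (A.det ^ 2)⁻¹ := by
    rw [gramDet_toLp_rows, det_nonsing_inv, Ring.inverse_eq_inv', inv_pow]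
  obtain ⟨m, hm, hm_le⟩ := exists_three_mul_norm_latticePoint_pow_four_le
    (u := toLp 2 (A⁻¹ 0)) (v := toLp 2 (A⁻¹ 1)) (by rw [hD]; positivity)
  rw [hD] at hm_le
  have hx : ‖dualLatticePoint A m‖ ^ 2 * |A.det| ≤ 2 / √3 := by
    refine le_two_div_sqrt_three ?_
    calc 3 * (‖dualLatticePoint A m‖ ^ 2 * |A.det|) ^ 2
        = 3 * ‖dualLatticePoint A m‖ ^ 4 * A.det ^ 2 := by rw [mul_pow, sq_abs]; ring
      _ ≤ 4 * (A.det ^ 2)⁻¹ * A.det ^ 2 := mul_le_mul_of_nonneg_right hm_le (sq_nonneg _)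
      _ = 4 := by field_simp
  calc flatTorusLambda1 A * flatTorusArea A
      ≤ 4 * π ^ 2 * ‖dualLatticePoint A m‖ ^ 2 * |A.det| := by
        unfold flatTorusArea
        gcongr
        exact flatTorusLambda1_le A hm
    _ ≤ 4 * π ^ 2 * (2 / √3) := by rw [mul_assoc]; gcongr
    _ = 8 * π ^ 2 / √3 := by ring

lemma inv_equilateral :
    (!![1, 1/2; 0, √3/2] : Matrix (Fin 2) (Fin 2) ℝ)⁻¹ = !![1, -1/√3; 0, 2/√3] := by
  refine inv_eq_left_inv ?_
  ext i j
  fin_cases i <;> fin_cases j <;> simp [field]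

lemma one_le_sq_sub_mul_add_sq {m : Fin 2 → ℤ} (hm : m ≠ 0) :
    1 ≤ m 0 ^ 2 - m 0 * m 1 + m 1 ^ 2 := by
  have key : 0 < (2 * m 0 - m 1) ^ 2 + 3 * m 1 ^ 2 := by
    rcases eq_or_ne (m 1) 0 with h1 | h1
    · have h0 : m 0 ≠ 0 := fun h0 => hm (by ext i; fin_cases i <;> simp [h0, h1])
      have : 0 < m 0 ^ 2 := by positivity
      rw [h1]
      linarith
    · positivity
  linarith

lemma norm_dualLatticePoint_equilateral_sq (m : Fin 2 → ℤ) :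
    ‖dualLatticePoint !![1, 1/2; 0, √3/2] m‖ ^ 2 =
      4 / 3 * ((m 0 ^ 2 - m 0 * m 1 + m 1 ^ 2 : ℤ) : ℝ) := by
  rw [dualLatticePoint, inv_equilateral, norm_latticePoint_toLp_rows_sq]
  simp only [mulVec, dotProduct, Fin.sum_univ_two, transpose_apply, of_apply, cons_val',
    cons_val_zero, cons_val_one, cons_val_fin_one, one_mul, zero_mul, add_zero, Int.cast_add,
    Int.cast_sub, Int.cast_pow, Int.cast_mul]
  field_simp
  rw [sq_sqrt (by norm_num)]
  ring

lemma le_flatTorusLambda1_equilateral :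
    16 * π ^ 2 / 3 ≤ flatTorusLambda1 !![1, 1/2; 0, √3/2] := by
  refine le_flatTorusLambda1 _ fun m hm => ?_
  rw [norm_dualLatticePoint_equilateral_sq]
  calc 16 * π ^ 2 / 3 = 4 * π ^ 2 * (4 / 3 * 1) := by ring
    _ ≤ _ := by gcongr; exact_mod_cast one_le_sq_sub_mul_add_sq hm

/-- Berger's theorem: for every flat metric on the two-dimensional torus, the normalized
first eigenvalue `λ₁ · area` is at most `8π²/√3`, with equality for the flat equilateral
torus (whose lattice is spanned by `(1,0)` and `(1/2, √3/2)`). -/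
theorem flat_torus_lambda1_area_le :
    (∀ A : Matrix (Fin 2) (Fin 2) ℝ, IsUnit A.det →
      flatTorusLambda1 A * flatTorusArea A ≤ 8 * π ^ 2 / Real.sqrt 3) ∧
    flatTorusLambda1 !![1, 1/2; 0, Real.sqrt 3 / 2] *
      flatTorusArea !![1, 1/2; 0, Real.sqrt 3 / 2] = 8 * π ^ 2 / Real.sqrt 3 := by
  have h_area : flatTorusArea !![1, 1/2; 0, √3/2] = √3 / 2 := by
    rw [flatTorusArea, det_fin_two_of, one_mul, mul_zero, sub_zero, abs_of_nonneg (by positivity)]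
  refine ⟨fun A hA => flatTorusLambda1_mul_area_le A hA.ne_zero,
    le_antisymm (flatTorusLambda1_mul_area_le _ (by simp [det_fin_two_of])) ?_⟩
  calc 8 * π ^ 2 / √3 = 16 * π ^ 2 / 3 * (√3 / 2) := by
        field_simp
        rw [sq_sqrt (by norm_num)]
        norm_num
    _ ≤ _ := by rw [h_area]; gcongr; exact le_flatTorusLambda1_equilateral
end

section
/- Let (M,g) be a compact Riemannian manifold and c > 0 such that every metric ball of radius 2c in M is strictly geodesically convex. If σ : M → M is an isometric involution with d(σ(p), p) < c for some point p, then σ has a fixed point. -/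
open Set Metric

/-- A unit speed minimizing geodesic segment from `p` to `q`, parametrized on
`[0, dist p q]`. -/
def IsUnitSpeedGeodesicSegment {X : Type*} [MetricSpace X] (γ : ℝ → X) (p q : X) : Prop :=
  γ 0 = p ∧ γ (dist p q) = q ∧
    ∀ s ∈ Icc (0:ℝ) (dist p q), ∀ t ∈ Icc (0:ℝ) (dist p q), dist (γ s) (γ t) = |s - t|

/-- A set is strictly geodesically convex if any two of its points are joined by a
minimizing geodesic contained in the set, and this minimizing geodesic is unique. -/
def StrictlyGeodesicallyConvex {X : Type*} [MetricSpace X] (S : Set X) : Prop :=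
  ∀ p ∈ S, ∀ q ∈ S,
    (∃ γ : ℝ → X, IsUnitSpeedGeodesicSegment γ p q ∧ γ '' Icc (0:ℝ) (dist p q) ⊆ S) ∧
    (∀ γ₁ γ₂ : ℝ → X, IsUnitSpeedGeodesicSegment γ₁ p q → IsUnitSpeedGeodesicSegment γ₂ p q →
      EqOn γ₁ γ₂ (Icc (0:ℝ) (dist p q)))

/-- Let `M` be a compact (Riemannian) manifold, viewed with its distance, and `c > 0`
such that every metric ball of radius `2c` is strictly geodesically convex.  If
`σ : M → M` is an isometric involution with `dist (σ p) p < c` for some point `p`,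
then `σ` has a fixed point. -/
theorem small_displacement_involution_has_fixed_point
    {M : Type*} [MetricSpace M] [CompactSpace M] (c : ℝ) (hc : 0 < c)
    (hconv : ∀ x : M, StrictlyGeodesicallyConvex (ball x (2 * c)))
    (σ : M → M) (hiso : Isometry σ) (hinv : σ ∘ σ = id)
    (p : M) (hp : dist (σ p) p < c) :
    ∃ x : M, σ x = x := by
  have hσσ : ∀ x, σ (σ x) = x := fun x => congrFun hinv x
  have hDlt : dist p (σ p) < c := by rw [dist_comm]; exact hp
  have hDnn : (0:ℝ) ≤ dist p (σ p) := dist_nonneg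
  have hpball : p ∈ ball p (2 * c) := mem_ball_self (by linarith)
  have hqball : σ p ∈ ball p (2 * c) := by
    rw [mem_ball, dist_comm]; linarith
  obtain ⟨⟨γ, hγ, _⟩, huniq⟩ := hconv p p hpball (σ p) hqball
  obtain ⟨h0, hd, hspd⟩ := hγ
  have hδ : IsUnitSpeedGeodesicSegment (fun t => σ (γ (dist p (σ p) - t))) p (σ p) := by
    refine ⟨?_, ?_, ?_⟩
    · show σ (γ (dist p (σ p) - 0)) = p
      rw [sub_zero, hd, hσσ]
    · show σ (γ (dist p (σ p) - dist p (σ p))) = σ p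
      rw [sub_self, h0]
    · intro s hs t ht
      have hs' : dist p (σ p) - s ∈ Icc (0:ℝ) (dist p (σ p)) :=
        ⟨by linarith [hs.2], by linarith [hs.1]⟩
      have ht' : dist p (σ p) - t ∈ Icc (0:ℝ) (dist p (σ p)) :=
        ⟨by linarith [ht.2], by linarith [ht.1]⟩
      show dist (σ (γ (dist p (σ p) - s))) (σ (γ (dist p (σ p) - t))) = |s - t|
      rw [hiso.dist_eq, hspd _ hs' _ ht']
      have : dist p (σ p) - s - (dist p (σ p) - t) = t - s := by ring
      rw [this, abs_sub_comm]
  have hmem : dist p (σ p) / 2 ∈ Icc (0:ℝ) (dist p (σ p)) := ⟨by linarith, by linarith⟩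
  have heq := huniq γ _ ⟨h0, hd, hspd⟩ hδ hmem
  refine ⟨γ (dist p (σ p) / 2), ?_⟩
  have h2 : dist p (σ p) - dist p (σ p) / 2 = dist p (σ p) / 2 := by ring
  have h3 : (fun t => σ (γ (dist p (σ p) - t))) (dist p (σ p) / 2)
      = σ (γ (dist p (σ p) / 2)) := by simp only [h2]
  exact (heq.trans h3).symm
end

section
/- Let Σ_ε = (Σ∖B_ε) ∪ M_ε be a closed surface decomposed into two pieces glued along their common boundary. If the first eigenvalue λ of Σ_ε has an eigenfunction u with ∫_{M_ε} u = 0 and λ ≤ μ₁(M_ε) (the first nonzero Neumann eigenvalue of M_ε), then μ₁(Σ∖B_ε) ≤ λ, where μ₁(Σ∖B_ε) is the first nonzero Neumann eigenvalue of Σ∖B_ε. -/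
open MeasureTheory Set

/-- The first nonzero Neumann eigenvalue of a subdomain `S`, characterized
variationally: the infimum of Rayleigh quotients of functions with zero mean on `S`. -/
noncomputable def neumannEV {M : Type*} [MeasurableSpace M] (μ : Measure M)
    (grad : (M → ℝ) →ₗ[ℝ] (M → EuclideanSpace ℝ (Fin 2))) (S : Set M) : ℝ :=
  sInf {t : ℝ | ∃ φ : M → ℝ, (∫ x in S, φ x ∂μ) = 0 ∧ (∫ x in S, (φ x) ^ 2 ∂μ) ≠ 0 ∧
    t = (∫ x in S, ‖grad φ x‖ ^ 2 ∂μ) / ∫ x in S, (φ x) ^ 2 ∂μ}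

/-- Let `Σ_ε = A ∪ B` be a closed surface decomposed into the two pieces
`A = Σ∖B_ε` and `B = M_ε` glued along their common (null) boundary.  If the first
eigenvalue `λ` of `Σ_ε` has an eigenfunction `u` with `∫_B u = 0` and
`λ ≤ μ₁(B)`, then `μ₁(A) ≤ λ`. -/
theorem neumann_eigenvalue_le_of_decomposition
    {M : Type*} [MeasurableSpace M] (μ : Measure M)
    (grad : (M → ℝ) →ₗ[ℝ] (M → EuclideanSpace ℝ (Fin 2)))
    (A B : Set M) (hA : MeasurableSet A) (hB : MeasurableSet B)
    (hUnion : A ∪ B = univ) (hNullInter : μ (A ∩ B) = 0)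
    (u : M → ℝ) (lam : ℝ) (hlam : 0 ≤ lam)
    (hu2 : Integrable (fun x => (u x) ^ 2) μ)
    (hgu : Integrable (fun x => ‖grad u x‖ ^ 2) μ)
    -- `u` is a `lam`-eigenfunction on the closed surface: Rayleigh identity
    (heig : (∫ x, ‖grad u x‖ ^ 2 ∂μ) = lam * ∫ x, (u x) ^ 2 ∂μ)
    (hmeanB : (∫ x in B, u x ∂μ) = 0)
    -- since the surface is closed and `u` is a nonconstant eigenfunction, `∫_Σ u = 0`
    (hmeanA : (∫ x in A, u x ∂μ) = 0)
    (hA2 : (∫ x in A, (u x) ^ 2 ∂μ) ≠ 0)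
    (hcomp : lam ≤ neumannEV μ grad B) :
    neumannEV μ grad A ≤ lam := by

  have hbdd : ∀ S : Set M, MeasurableSet S → BddBelow {t : ℝ | ∃ φ : M → ℝ,
      (∫ x in S, φ x ∂μ) = 0 ∧ (∫ x in S, (φ x) ^ 2 ∂μ) ≠ 0 ∧
      t = (∫ x in S, ‖grad φ x‖ ^ 2 ∂μ) / ∫ x in S, (φ x) ^ 2 ∂μ} := by
    intro S hS
    refine ⟨0, fun t ht => ?_⟩
    obtain ⟨φ, -, -, rfl⟩ := ht
    exact div_nonneg (setIntegral_nonneg hS fun x _ => sq_nonneg _)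
      (setIntegral_nonneg hS fun x _ => sq_nonneg _)
  have hApos : 0 < ∫ x in A, (u x) ^ 2 ∂μ :=
    lt_of_le_of_ne (setIntegral_nonneg hA fun x _ => sq_nonneg _) (Ne.symm hA2)
  have hBAeq : (B \ A : Set M) =ᵐ[μ] B := by
    rw [diff_ae_eq_self]
    rwa [inter_comm] at hNullInter
  have hsplit : ∀ f : M → ℝ, Integrable f μ →
      (∫ x, f x ∂μ) = (∫ x in A, f x ∂μ) + ∫ x in B, f x ∂μ := by
    intro f hf
    have h1 : (∫ x, f x ∂μ) = ∫ x in A ∪ (B \ A), f x ∂μ := by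
      rw [union_diff_self, hUnion, setIntegral_univ]
    rw [h1, setIntegral_union disjoint_sdiff_self_right (hB.diff hA)
      hf.integrableOn hf.integrableOn, setIntegral_congr_set hBAeq]
  have hBineq : lam * (∫ x in B, (u x) ^ 2 ∂μ) ≤ ∫ x in B, ‖grad u x‖ ^ 2 ∂μ := by
    by_cases hB2 : (∫ x in B, (u x) ^ 2 ∂μ) = 0
    · rw [hB2, mul_zero]
      exact setIntegral_nonneg hB fun x _ => sq_nonneg _
    · have hBpos : 0 < ∫ x in B, (u x) ^ 2 ∂μ :=
        lt_of_le_of_ne (setIntegral_nonneg hB fun x _ => sq_nonneg _) (Ne.symm hB2)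
      have hmem : (∫ x in B, ‖grad u x‖ ^ 2 ∂μ) / (∫ x in B, (u x) ^ 2 ∂μ) ∈
          {t : ℝ | ∃ φ : M → ℝ, (∫ x in B, φ x ∂μ) = 0 ∧ (∫ x in B, (φ x) ^ 2 ∂μ) ≠ 0 ∧
            t = (∫ x in B, ‖grad φ x‖ ^ 2 ∂μ) / ∫ x in B, (φ x) ^ 2 ∂μ} :=
        ⟨u, hmeanB, hB2, rfl⟩
      have := le_trans hcomp (csInf_le (hbdd B hB) hmem)
      exact (le_div_iff₀ hBpos).mp this |>.trans_eq (by ring) |>.trans_eq rfl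
  have hsplit2 : (∫ x in A, ‖grad u x‖ ^ 2 ∂μ) + ∫ x in B, ‖grad u x‖ ^ 2 ∂μ =
      lam * ((∫ x in A, (u x) ^ 2 ∂μ) + ∫ x in B, (u x) ^ 2 ∂μ) := by
    rw [← hsplit _ hgu, ← hsplit _ hu2, heig]
  have hAineq : (∫ x in A, ‖grad u x‖ ^ 2 ∂μ) ≤ lam * ∫ x in A, (u x) ^ 2 ∂μ := by
    nlinarith [hBineq, hsplit2]
  have hmemA : (∫ x in A, ‖grad u x‖ ^ 2 ∂μ) / (∫ x in A, (u x) ^ 2 ∂μ) ∈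
      {t : ℝ | ∃ φ : M → ℝ, (∫ x in A, φ x ∂μ) = 0 ∧ (∫ x in A, (φ x) ^ 2 ∂μ) ≠ 0 ∧
        t = (∫ x in A, ‖grad φ x‖ ^ 2 ∂μ) / ∫ x in A, (φ x) ^ 2 ∂μ} :=
    ⟨u, hmeanA, hA2, rfl⟩
  exact le_trans (csInf_le (hbdd A hA) hmemA) ((div_le_iff₀ hApos).mpr (by linarith))
end

section
/- Let (λ_k(ε))_{k} and (λ'_k(ε))_k be the eigenvalues (in increasing order, with multiplicity) of nonnegative closed quadratic forms q_ε on Hilbert spaces H_ε and q'_ε on H'_ε, both with discrete spectrum. Suppose there are linear maps Φ_ε : dom(q_ε) → dom(q'_ε) such that for every family u_ε in the span L_k(ε) of the first k+1 eigenvectors of q_ε with ‖u_ε‖ + q_ε(u_ε) bounded: (1) ‖Φ_ε u_ε‖_{H'_ε} − ‖u_ε‖_{H_ε} → 0 as ε → 0, and (2) q'_ε(Φ_ε u_ε) ≤ q_ε(u_ε). If λ_k(ε) ≤ C uniformly, then λ'_k(ε) ≤ λ_k(ε) + o(1) as ε → 0. -/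
open Filter Topology

/-- The 'Main Lemma' (following Post) comparing the spectra of two families of
quadratic forms via a coupling map.  `lam k ε` and `lam' k ε` denote the `k`-th
eigenvalues of the nonnegative closed quadratic forms `q ε` on `H ε` and `q' ε` on
`H' ε` (both with discrete spectrum); `L k ε` is the span of the first `k+1`
eigenvectors of `q ε`; `lam'` satisfies the min–max principle.  If the coupling maps
`Φ ε` are asymptotically norm preserving on bounded families in `L k ε` and decrease
the forms, and `lam k ε ≤ C` uniformly, then `lam' k ε ≤ lam k ε + o(1)` as
`ε → 0⁺`. -/
theorem coupling_main_lemma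
    (H H' : ℝ → Type*)
    [∀ ε, NormedAddCommGroup (H ε)] [∀ ε, InnerProductSpace ℝ (H ε)]
    [∀ ε, NormedAddCommGroup (H' ε)] [∀ ε, InnerProductSpace ℝ (H' ε)]
    (q : ∀ ε, H ε → ℝ) (q' : ∀ ε, H' ε → ℝ)
    (D' : ∀ ε, Submodule ℝ (H' ε))
    (lam lam' : ℕ → ℝ → ℝ)
    (L : ℕ → ∀ ε, Submodule ℝ (H ε))
    (Φ : ∀ ε, H ε →ₗ[ℝ] H' ε)
    (k : ℕ)
    (hq0 : ∀ ε u, 0 ≤ q ε u)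
    (hq'0 : ∀ ε u, 0 ≤ q' ε u)
    -- `L k ε` is the span of the first `k+1` eigenvectors of `q ε`:
    (hLrank : ∀ ε, Module.finrank ℝ (L k ε) = k + 1)
    (hLq : ∀ ε, ∀ u ∈ L k ε, q ε u ≤ lam k ε * ‖u‖ ^ 2)
    (hΦdom : ∀ ε, ∀ u ∈ L k ε, Φ ε u ∈ D' ε)
    -- min–max principle for `lam' k ε`:
    (hminmax : ∀ ε (V : Submodule ℝ (H' ε)), V ≤ D' ε → Module.finrank ℝ V = k + 1 →
      ∀ b : ℝ, (∀ u ∈ V, q' ε u ≤ b * ‖u‖ ^ 2) → lam' k ε ≤ b)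
    -- (1) asymptotic norm preservation on bounded families in `L k ε`:
    (h1 : ∀ u : ∀ ε : ℝ, H ε, (∀ ε, u ε ∈ L k ε) →
      (∃ C, ∀ ε, ‖u ε‖ + q ε (u ε) ≤ C) →
      Tendsto (fun ε => ‖Φ ε (u ε)‖ - ‖u ε‖) (𝓝[>] (0:ℝ)) (𝓝 0))
    -- (2) the coupling map decreases the quadratic forms:
    (h2 : ∀ ε, ∀ u ∈ L k ε, q' ε (Φ ε u) ≤ q ε u)
    (hbd : ∃ C, ∀ ε > (0:ℝ), lam k ε ≤ C) :
    ∀ δ > 0, ∀ᶠ ε in 𝓝[>] (0:ℝ), lam' k ε ≤ lam k ε + δ := by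
  classical
  intro δ hδ
  obtain ⟨C, hC⟩ := hbd
  -- every L k ε contains a nonzero vector
  have hne : ∀ ε, ∃ v : H ε, v ∈ L k ε ∧ v ≠ 0 := by
    intro ε
    by_contra h
    push_neg at h
    have hbot : L k ε = ⊥ := by
      rw [Submodule.eq_bot_iff]
      intro x hx
      exact h x hx
    have := hLrank ε
    rw [hbot] at this
    simp [finrank_bot] at this
  -- λ_k(ε) ≥ 0
  have hlamnn : ∀ ε, 0 ≤ lam k ε := by
    intro ε
    obtain ⟨v, hv, hv0⟩ := hne ε
    by_contra hneg
    push_neg at hneg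
    have h1' := hLq ε v hv
    have h2' := hq0 ε v
    have hs : 0 < ‖v‖ ^ 2 := pow_pos (norm_pos_iff.mpr hv0) 2
    nlinarith
  by_contra hcon
  rw [Filter.not_eventually] at hcon
  have hfreq : ∃ᶠ ε in 𝓝[>] (0:ℝ), (lam k ε + δ < lam' k ε ∧ 0 < ε) := by
    refine hcon.mp ?_
    filter_upwards [self_mem_nhdsWithin] with ε hε h
    exact ⟨lt_of_not_ge h, hε⟩
  -- C ≥ 0
  have hCnn : 0 ≤ C := by
    obtain ⟨ε₀, _, hε₀⟩ := hfreq.exists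
    exact le_trans (hlamnn ε₀) (hC ε₀ hε₀)
  set r : ℝ := Real.sqrt (C / (C + δ)) with hr
  have hCδ : 0 < C + δ := by linarith
  have hrnn : 0 ≤ r := Real.sqrt_nonneg _
  have hr1 : r < 1 := by
    have hlt1 : C / (C + δ) < 1 := by
      rw [div_lt_one hCδ]; linarith
    calc r = Real.sqrt (C / (C + δ)) := hr
      _ < Real.sqrt 1 := Real.sqrt_lt_sqrt (div_nonneg hCnn hCδ.le) hlt1
      _ = 1 := Real.sqrt_one
  -- the bad-vector predicate
  set S : ℝ → Prop := fun ε =>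
    ∃ w : H ε, w ∈ L k ε ∧ ‖w‖ = 1 ∧ ‖Φ ε w‖ ≤ r ∧ q ε w ≤ C with hSdef
  -- at each frequent ε we can find a bad unit vector
  have hS : ∀ ε, 0 < ε → lam k ε + δ < lam' k ε → S ε := by
    intro ε hε hlt
    have hlamC : lam k ε ≤ C := hC ε hε
    have hlamnn' := hlamnn ε
    have hlamδ : 0 < lam k ε + δ := by linarith
    -- first find v ∈ L, v ≠ 0, with ‖Φ v‖² (lam+δ) ≤ lam ‖v‖²
    have hkey : ∃ v : H ε, v ∈ L k ε ∧ v ≠ 0 ∧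
        (lam k ε + δ) * ‖Φ ε v‖ ^ 2 ≤ lam k ε * ‖v‖ ^ 2 := by
      set V : Submodule ℝ (H' ε) := (L k ε).map (Φ ε) with hV
      have hVD' : V ≤ D' ε := by
        rintro x ⟨v, hv, rfl⟩
        exact hΦdom ε v hv
      have hnotboth : ¬ (Module.finrank ℝ V = k + 1 ∧
          ∀ u ∈ V, q' ε u ≤ (lam k ε + δ) * ‖u‖ ^ 2) := by
        rintro ⟨hrank, hall⟩
        exact absurd (hminmax ε V hVD' hrank _ hall) (not_le.2 hlt)
      haveI : FiniteDimensional ℝ (L k ε) :=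
        FiniteDimensional.of_finrank_eq_succ (hLrank ε)
      set f : (L k ε) →ₗ[ℝ] H' ε := (Φ ε).comp (L k ε).subtype with hf
      have hrangef : LinearMap.range f = V := by
        rw [hf, LinearMap.range_comp, Submodule.range_subtype]
      by_cases hinj : Function.Injective f
      · -- then finrank V = k+1, so the ∀-clause fails
        have hrank : Module.finrank ℝ V = k + 1 := by
          rw [← hrangef, LinearMap.finrank_range_of_inj hinj, hLrank ε]
        have hex : ∃ u ∈ V, ¬ q' ε u ≤ (lam k ε + δ) * ‖u‖ ^ 2 := by
          by_contra hh
          push_neg at hh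
          exact hnotboth ⟨hrank, hh⟩
        obtain ⟨u, hu, hqu⟩ := hex
        obtain ⟨v, hv, rfl⟩ := hu
        push_neg at hqu
        have h2v : q' ε (Φ ε v) ≤ q ε v := h2 ε v hv
        have hqv : q ε v ≤ lam k ε * ‖v‖ ^ 2 := hLq ε v hv
        have hstrict : (lam k ε + δ) * ‖Φ ε v‖ ^ 2 < lam k ε * ‖v‖ ^ 2 := by
          linarith
        have hv0 : v ≠ 0 := by
          rintro rfl
          rw [map_zero] at hstrict
          simp only [norm_zero] at hstrict
          nlinarith
        exact ⟨v, hv, hv0, le_of_lt hstrict⟩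
      · -- not injective: kernel gives v ≠ 0 with Φ v = 0
        rw [Function.not_injective_iff] at hinj
        obtain ⟨x, y, hxy, hne'⟩ := hinj
        refine ⟨(x - y : L k ε), (x - y : L k ε).2, ?_, ?_⟩
        · simp only [ne_eq, Submodule.coe_eq_zero, sub_eq_zero]
          exact hne'
        · have hΦ0 : Φ ε ((x - y : L k ε) : H ε) = 0 := by
            have : f (x - y) = 0 := by rw [map_sub, hxy, sub_self]
            simpa [hf] using this
          rw [hΦ0]
          simp only [norm_zero]
          have hnn := mul_nonneg hlamnn' (sq_nonneg ‖((x - y : L k ε) : H ε)‖)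
          nlinarith
    obtain ⟨v, hv, hv0, hineq⟩ := hkey
    have hspos : 0 < ‖v‖ := norm_pos_iff.2 hv0
    have hn1 : ‖‖v‖⁻¹ • v‖ = 1 := by
      rw [norm_smul, Real.norm_eq_abs, abs_of_nonneg (inv_nonneg.2 (norm_nonneg v)),
        inv_mul_cancel₀ (ne_of_gt hspos)]
    refine ⟨‖v‖⁻¹ • v, Submodule.smul_mem _ _ hv, hn1, ?_, ?_⟩
    · -- ‖Φ (‖v‖⁻¹ • v)‖ ≤ r
      have hnorm : ‖Φ ε (‖v‖⁻¹ • v)‖ = ‖v‖⁻¹ * ‖Φ ε v‖ := by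
        rw [map_smul, norm_smul, Real.norm_eq_abs, abs_of_nonneg (by positivity)]
      rw [hnorm, hr]
      rw [show ‖v‖⁻¹ * ‖Φ ε v‖ = Real.sqrt ((‖v‖⁻¹ * ‖Φ ε v‖) ^ 2) by
        rw [Real.sqrt_sq (by positivity)]]
      apply Real.sqrt_le_sqrt
      have ht2 : ‖Φ ε v‖ ^ 2 ≤ ‖v‖ ^ 2 := by nlinarith [sq_nonneg ‖Φ ε v‖]
      rw [mul_pow, inv_pow, ← div_eq_inv_mul, div_le_div_iff₀ (by positivity) hCδ]
      nlinarith [sq_nonneg ‖Φ ε v‖, sq_nonneg ‖v‖]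
    · -- q ε (‖v‖⁻¹ • v) ≤ C
      have hqle := hLq ε (‖v‖⁻¹ • v) (Submodule.smul_mem _ _ hv)
      rw [hn1] at hqle
      calc q ε (‖v‖⁻¹ • v) ≤ lam k ε * 1 ^ 2 := hqle
        _ = lam k ε := by ring
        _ ≤ C := hlamC
  have hSfreq : ∃ᶠ ε in 𝓝[>] (0:ℝ), S ε :=
    hfreq.mono fun ε ⟨hlt, hε⟩ => hS ε hε hlt
  -- define the test family
  set u : ∀ ε : ℝ, H ε := fun ε => if h : S ε then h.choose else 0 with hu
  have humem : ∀ ε, u ε ∈ L k ε := by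
    intro ε
    show (if h : S ε then h.choose else 0) ∈ L k ε
    by_cases h : S ε
    · rw [dif_pos h]; exact h.choose_spec.1
    · rw [dif_neg h]; exact Submodule.zero_mem _
  have hq00 : ∀ ε, q ε (0 : H ε) = 0 := by
    intro ε
    have h1' := hLq ε 0 (Submodule.zero_mem _)
    have h2' := hq0 ε (0 : H ε)
    simp at h1'
    linarith
  have hubd : ∃ C', ∀ ε, ‖u ε‖ + q ε (u ε) ≤ C' := by
    refine ⟨1 + C, fun ε => ?_⟩
    have hueq : u ε = (if h : S ε then h.choose else 0) := rfl
    rw [hueq]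
    by_cases h : S ε
    · rw [dif_pos h]
      obtain ⟨_, hn, _, hqC⟩ := h.choose_spec
      rw [hn]; linarith
    · rw [dif_neg h]
      simp only [norm_zero, hq00 ε]
      linarith
  have htend := h1 u humem hubd
  have hev : ∀ᶠ ε in 𝓝[>] (0:ℝ), |‖Φ ε (u ε)‖ - ‖u ε‖| < 1 - r := by
    have := Metric.tendsto_nhds.mp htend (1 - r) (by linarith)
    filter_upwards [this] with ε hε
    rwa [Real.dist_eq, sub_zero] at hε
  obtain ⟨ε, hSε, habs⟩ := (hSfreq.and_eventually hev).exists
  have huε : u ε = hSε.choose := by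
    show (if h : S ε then h.choose else 0) = hSε.choose
    rw [dif_pos hSε]
  obtain ⟨_, hn, hΦr, _⟩ := hSε.choose_spec
  rw [huε, hn] at habs
  have hle : ‖Φ ε (hSε.choose)‖ - 1 ≤ r - 1 := by linarith
  have := neg_le_abs (‖Φ ε (hSε.choose)‖ - 1)
  linarith
end
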